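/- arXiv:2112.10141 — 2 statements merged into one kernel-verified Lean document; each statement's English description precedes it below -/
import Mathlib

section
/- Let (h_n)_{n∈ℕ} be an infinite decreasing chain h_{n+1} ⊂ h_n of pairwise strongly separated half-spaces in a finite-dimensional CAT(0) cubical complex X. Then the sequence of hyperplanes (ĥ_n) is a Gromov sequence in the contact graph CX, i.e. (ĥ_n | ĥ_m)_{ĥ₀} → ∞ as n, m → ∞; in particular CX is unbounded and its Gromov boundary is nonempty. -/
/-!
A combinatorial model of a finite-dimensional CAT(0) cubical complex:
the vertex set `V` together with its collection of half-spaces `HS ⊆ Set V`,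
axiomatized as a pocset of subsets of `V` whose dual (Sageev) complex has
vertex set exactly `V`.
-/

open Set

variable {V : Type*}

/-- Two half-spaces are transverse if all four corner intersections are nonempty. -/
def Transverse (h k : Set V) : Prop :=
  (h ∩ k).Nonempty ∧ (hᶜ ∩ k).Nonempty ∧ (h ∩ kᶜ).Nonempty ∧ (hᶜ ∩ kᶜ).Nonempty

lemma Transverse.symm {h k : Set V} (t : Transverse h k) : Transverse k h := by
  obtain ⟨a, b, c, d⟩ := t
  refine ⟨?_, ?_, ?_, ?_⟩ <;> rw [Set.inter_comm] <;> assumption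

/-- `h` and `k` bound the same hyperplane (they are equal or complementary). -/
def SameHyp (h k : Set V) : Prop := k = h ∨ k = hᶜ

lemma SameHyp.symm {h k : Set V} (s : SameHyp h k) : SameHyp k h := by
  rcases s with rfl | rfl
  · exact Or.inl rfl
  · exact Or.inr (compl_compl h).symm

/-- A model of a finite-dimensional CAT(0) cubical complex with vertex set `V`. -/
structure CubicalCpx (V : Type*) where
  /-- the collection of half-spaces -/
  HS : Set (Set V)
  compl_mem : ∀ h ∈ HS, hᶜ ∈ HS
  proper : ∀ h ∈ HS, h.Nonempty ∧ hᶜ.Nonempty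
  /-- finitely many hyperplanes separate two vertices -/
  finite_sep : ∀ x y : V, {h ∈ HS | x ∈ h ∧ y ∉ h}.Finite
  /-- distinct vertices are separated by a hyperplane -/
  sep : ∀ x y : V, x ≠ y → ∃ h ∈ HS, x ∈ h ∧ y ∉ h
  /-- finite dimensionality: a bound on families of pairwise transverse hyperplanes -/
  dim : ℕ
  finite_dim : ∀ T : Finset (Set V), ↑T ⊆ HS →
    (∀ h ∈ T, ∀ k ∈ T, h ≠ k → Transverse h k) → T.card ≤ dim
  /-- every consistent total orientation satisfying the descending chain condition
  is the ultrafilter of half-spaces of an actual vertex (Sageev--Roller duality) -/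
  realized : ∀ ω : Set (Set V), ω ⊆ HS →
    (∀ h ∈ HS, h ∈ ω ↔ hᶜ ∉ ω) →
    (∀ h ∈ ω, ∀ k ∈ ω, (h ∩ k).Nonempty) →
    (∀ f : ℕ → Set V, (∀ n, f n ∈ ω) → (∀ n, f (n + 1) ⊆ f n) → ∃ n, f (n + 1) = f n) →
    ∃ x : V, ω = {h ∈ HS | x ∈ h}

namespace CubicalCpx

variable (C : CubicalCpx V)

/-- `h ⊊ k` tightly nested: no half-space of the complex lies properly between them. -/
def TightlyNested (h k : Set V) : Prop :=
  h ⊂ k ∧ ∀ l ∈ C.HS, h ⊆ l → l ⊆ k → l = h ∨ l = k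

/-- tightly nested up to a choice of orientations of the two hyperplanes -/
def TightContact (h k : Set V) : Prop :=
  ∃ h' k', SameHyp h h' ∧ SameHyp k k' ∧ C.TightlyNested h' k'

/-- Two half-spaces (hyperplanes) are strongly separated if they are parallel
(not transverse) and no hyperplane of the complex is transverse to both. -/
def StronglySeparated (h k : Set V) : Prop :=
  ¬ Transverse h k ∧ ∀ l ∈ C.HS, ¬ (Transverse l h ∧ Transverse l k)

/-- The contact graph: vertices are the hyperplanes of `X` (here represented by
their half-spaces, with both orientations of a hyperplane at graph distance `0`
from each other being excluded by `¬ SameHyp`), and two distinct hyperplanes are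
adjacent iff they are transverse or tightly nested. -/
def contactGraph : SimpleGraph C.HS where
  Adj h k := ¬ SameHyp (h : Set V) k ∧
    (Transverse (h : Set V) k ∨ C.TightContact h k ∨ C.TightContact k h)
  symm := ⟨by
    rintro a b ⟨ns, r⟩
    refine ⟨fun s => ns s.symm, ?_⟩
    rcases r with t | tc | tc
    · exact Or.inl t.symm
    · exact Or.inr (Or.inr tc)
    · exact Or.inr (Or.inl tc)⟩
  loopless := ⟨fun a ha => ha.1 (Or.inl rfl)⟩

/-- the combinatorial metric: the number of hyperplanes separating two vertices -/
noncomputable def dist (x y : V) : ℕ := {h ∈ C.HS | x ∈ h ∧ y ∉ h}.ncard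

end CubicalCpx

/-!
An edge of the contact graph never jumps across a hyperplane `ĥ`: if neither endpoint equals or
is transverse to `ĥ`, both endpoints lie on the same side of `ĥ`. So a walk from `ĥ₀` to a
hyperplane crossing `ĥₖ` meets, for every `i < k`, a hyperplane crossing `ĥᵢ`; strong separation
makes these hyperplanes pairwise distinct, hence such a walk has length at least `k`. Cutting a
geodesic from `ĥ₀` to `ĥₙ` where it crosses `ĥⱼ₊₁` gives `d(ĥⱼ₊₁, ĥₙ) + j ≤ d(ĥ₀, ĥₙ)`, and the
triangle inequality through `ĥⱼ₊₁` with `j = min n m - 2` bounds `(ĥₙ | ĥₘ)_{ĥ₀}` below by `j`.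
-/

def Crosses (h x : Set V) : Prop := SameHyp h x ∨ Transverse x h

def LiesIn (h x : Set V) : Prop := x ⊆ h ∨ xᶜ ⊆ h

namespace SameHyp

variable {h x y : Set V}

lemma trans (hx : SameHyp h x) (hy : SameHyp x y) : SameHyp h y := by
  rcases hx with rfl | rfl <;> rcases hy with rfl | rfl
  · exact Or.inl rfl
  · exact Or.inr rfl
  · exact Or.inr rfl
  · exact Or.inl (compl_compl h)

lemma of_compl_left (s : SameHyp hᶜ x) : SameHyp h x :=
  (s.imp_right fun e => e.trans (compl_compl h)).symm

lemma mem_HS {C : CubicalCpx V} (s : SameHyp h x) (hh : h ∈ C.HS) : x ∈ C.HS := by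
  rcases s with rfl | rfl
  exacts [hh, C.compl_mem _ hh]

end SameHyp

namespace Transverse

variable {h h' x y : Set V}

lemma compl_right (t : Transverse x h) : Transverse x hᶜ := by
  obtain ⟨t₁, t₂, t₃, t₄⟩ := t
  exact ⟨t₃, t₄, (compl_compl h).symm ▸ t₁, (compl_compl h).symm ▸ t₂⟩

lemma sameHyp_right (t : Transverse x h) (s : SameHyp h h') : Transverse x h' := by
  rcases s with rfl | rfl
  exacts [t, t.compl_right]

lemma not_sameHyp (t : Transverse x h) : ¬ SameHyp h x := by
  rintro (rfl | rfl)
  · obtain ⟨z, hz, hz'⟩ := t.2.1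
    exact hz hz'
  · obtain ⟨z, hz, hz'⟩ := t.1
    exact hz hz'

lemma false_of_liesIn (t : Transverse x y) (sx : LiesIn h x) (sy : LiesIn hᶜ y) : False := by
  obtain ⟨t₁, t₂, t₃, t₄⟩ := t
  rcases sx with sx | sx <;> rcases sy with sy | sy
  exacts [let ⟨_, hx, hy⟩ := t₁; sy hy (sx hx), let ⟨_, hx, hy⟩ := t₃; sy hy (sx hx),
    let ⟨_, hx, hy⟩ := t₂; sy hy (sx hx), let ⟨_, hx, hy⟩ := t₄; sy hy (sx hx)]

end Transverse

section Sides

variable {a b h x x' : Set V}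

lemma LiesIn.sameHyp (sx : LiesIn h x) (s : SameHyp x x') : LiesIn h x' := by
  rcases s with rfl | rfl
  · exact sx
  · rwa [LiesIn, compl_compl, or_comm]

lemma liesIn_or_liesIn_compl_of_not_transverse (ht : ¬ Transverse x h) :
    LiesIn h x ∨ LiesIn hᶜ x := by
  contrapose! ht
  simp only [LiesIn, not_or, ← inter_compl_nonempty_iff, compl_compl] at ht
  obtain ⟨⟨h₃, h₄⟩, h₁, h₂⟩ := ht
  exact ⟨h₁, h₂, h₃, h₄⟩

lemma sameHyp_of_liesIn_of_liesIn_compl (hx : x.Nonempty) (hxc : xᶜ.Nonempty)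
    (s : LiesIn h x) (sc : LiesIn hᶜ x) : SameHyp h x := by
  rcases s with s | s <;> rcases sc with sc | sc
  · obtain ⟨z, hz⟩ := hx
    exact absurd (s hz) (sc hz)
  · exact Or.inl (s.antisymm (compl_subset_compl.mp sc))
  · exact Or.inr (sc.antisymm (compl_subset_comm.mp s))
  · obtain ⟨z, hz⟩ := hxc
    exact absurd (s hz) (sc hz)

lemma not_sameHyp_of_ssubset (hb : b.Nonempty) (hba : b ⊂ a) : ¬ SameHyp a b := by
  rintro (rfl | rfl)
  · exact hba.ne rfl
  · obtain ⟨z, hz⟩ := hb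
    exact hz (hba.subset hz)

lemma not_crosses_of_ssubset (hb : b.Nonempty) (hba : b ⊂ a) : ¬ Crosses a b := by
  rintro (s | t)
  · exact not_sameHyp_of_ssubset hb hba s
  · obtain ⟨z, hzb, hza⟩ := t.2.2.1
    exact hza (hba.subset hzb)

lemma liesIn_of_crosses_of_subset (hba : b ⊆ a) (hxa : ¬ Transverse x a) (c : Crosses b x) :
    LiesIn a x := by
  rcases c with (rfl | rfl) | t
  · exact Or.inl hba
  · exact Or.inr (by rwa [compl_compl])
  · refine (liesIn_or_liesIn_compl_of_not_transverse hxa).resolve_right fun hc => ?_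
    exact t.false_of_liesIn hc (by rw [compl_compl]; exact Or.inl hba)

end Sides

namespace CubicalCpx

variable {C : CubicalCpx V} {h : Set V}

open SimpleGraph

lemma TightlyNested.false_of_liesIn {a b : Set V} (hh : h ∈ C.HS) (ha : a ∈ C.HS)
    (hb : b ∈ C.HS) (tn : C.TightlyNested a b) (hna : ¬ SameHyp h a) (hnb : ¬ SameHyp h b)
    (sa : LiesIn h a) (sb : LiesIn hᶜ b) : False := by
  obtain ⟨hab, htight⟩ := tn
  rcases sa with sa | sa <;> rcases sb with sb | sb
  · obtain ⟨z, hz⟩ := (C.proper a ha).1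
    exact sb (hab.subset hz) (sa hz)
  · rcases htight h hh sa (compl_subset_compl.mp sb) with e | e
    exacts [hna (Or.inl e.symm), hnb (Or.inl e.symm)]
  · exact hab.not_subset (sb.trans (compl_subset_comm.mp sa))
  · obtain ⟨z, hz⟩ := (C.proper b hb).2
    exact hz (hab.subset (compl_subset_comm.mp sa (sb hz)))

lemma TightContact.false_of_liesIn {v w : Set V} (hh : h ∈ C.HS) (hv : v ∈ C.HS)
    (hw : w ∈ C.HS) (tc : C.TightContact v w) (hnv : ¬ SameHyp h v) (hnw : ¬ SameHyp h w)
    (sv : LiesIn h v) (sw : LiesIn hᶜ w) : False :=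
  let ⟨_, _, sx, sy, tn⟩ := tc
  tn.false_of_liesIn hh (sx.mem_HS hv) (sy.mem_HS hw) (fun s => hnv (s.trans sx.symm))
    (fun s => hnw (s.trans sy.symm)) (sv.sameHyp sx) (sw.sameHyp sy)

lemma not_contactGraph_adj_of_liesIn (hh : h ∈ C.HS) {v w : C.HS} (hnv : ¬ SameHyp h v)
    (hnw : ¬ SameHyp h w) (sv : LiesIn h v) (sw : LiesIn hᶜ w) : ¬ C.contactGraph.Adj v w := by
  rintro ⟨-, t | tc | tc⟩
  · exact t.false_of_liesIn sv sw
  · exact tc.false_of_liesIn hh v.2 w.2 hnv hnw sv sw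
  · refine tc.false_of_liesIn (C.compl_mem h hh) w.2 v.2 (fun s => hnw s.of_compl_left)
      (fun s => hnv s.of_compl_left) sw ?_
    rwa [compl_compl]

lemma exists_mem_support_crosses (hh : h ∈ C.HS) {a b : C.HS} (W : C.contactGraph.Walk a b)
    (sa : LiesIn hᶜ a) (sb : LiesIn h b) : ∃ u ∈ W.support, Crosses h u := by
  by_contra! hW
  have hb : ¬ LiesIn hᶜ b := fun sb' => hW b W.end_mem_support
    (Or.inl (sameHyp_of_liesIn_of_liesIn_compl (C.proper b b.2).1 (C.proper b b.2).2 sb sb'))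
  obtain ⟨d, hd, hfst, hsnd⟩ := W.exists_boundary_dart {u | LiesIn hᶜ u} sa hb
  have hcf := hW _ (W.dart_fst_mem_support_of_mem_darts hd)
  have hcs := hW _ (W.dart_snd_mem_support_of_mem_darts hd)
  have hs : LiesIn h d.snd :=
    (liesIn_or_liesIn_compl_of_not_transverse fun t => hcs (Or.inr t)).resolve_right hsnd
  exact not_contactGraph_adj_of_liesIn hh (fun s => hcs (Or.inl s)) (fun s => hcf (Or.inl s))
    hs hfst d.adj.symm

-- The two orientations of a hyperplane are distinct, non-adjacent vertices of the contact graph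
-- with the same neighbours.
lemma contactGraph_adj_of_sameHyp {u w w' : C.HS} (hadj : C.contactGraph.Adj u w)
    (s : SameHyp (w : Set V) w') : C.contactGraph.Adj u w' := by
  obtain ⟨hns, t | ⟨x, y, sx, sy, tn⟩ | ⟨x, y, sx, sy, tn⟩⟩ := hadj
  · exact ⟨fun s' => hns (s'.trans s.symm), Or.inl (t.sameHyp_right s)⟩
  · exact ⟨fun s' => hns (s'.trans s.symm), Or.inr (Or.inl ⟨x, y, sx, s.symm.trans sy, tn⟩)⟩
  · exact ⟨fun s' => hns (s'.trans s.symm), Or.inr (Or.inr ⟨x, y, s.symm.trans sx, sy, tn⟩)⟩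

lemma contactGraph_adj_of_transverse {h v : C.HS} (t : Transverse (v : Set V) h) :
    C.contactGraph.Adj h v :=
  ⟨t.not_sameHyp, Or.inl t.symm⟩

lemma edist_le_length_add_one_of_crosses {h v w : C.HS} (hv : Crosses (h : Set V) v)
    (hw : ¬ Crosses (h : Set V) w) (r : C.contactGraph.Walk v w) :
    C.contactGraph.edist h w ≤ r.length + 1 := by
  rcases hv with s | t
  · have hvw : v ≠ w := by
      rintro rfl
      exact hw (Or.inl s)
    obtain ⟨u, hadj, r', rfl⟩ := r.exists_eq_cons_of_ne hvw
    calc C.contactGraph.edist h w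
        ≤ (Walk.cons (contactGraph_adj_of_sameHyp hadj.symm s.symm).symm r').length :=
          edist_le _
      _ ≤ _ := by simp
  · exact (edist_le (Walk.cons (contactGraph_adj_of_transverse t) r)).trans_eq (by simp)

lemma StronglySeparated.false_of_crosses {a b x : Set V} (hss : C.StronglySeparated a b)
    (hab : ¬ SameHyp a b) (hx : x ∈ C.HS) (ha : Crosses a x) (hb : Crosses b x) : False := by
  rcases ha with sa | ta <;> rcases hb with sb | tb
  · exact hab (sa.trans sb.symm)
  · exact hss.1 (tb.symm.sameHyp_right sa.symm).symm
  · exact hss.1 (ta.symm.sameHyp_right sb.symm)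
  · exact hss.2 x hx ⟨ta, tb⟩

section Chain

variable {hs : ℕ → Set V}

lemma false_of_crosses_of_crosses (hmem : ∀ i, hs i ∈ C.HS) (hanti : StrictAnti hs)
    (hss : ∀ i j, i ≠ j → C.StronglySeparated (hs i) (hs j)) {i j : ℕ}
    (hij : i ≠ j) {x : Set V} (hx : x ∈ C.HS) (hi : Crosses (hs i) x) (hj : Crosses (hs j) x) :
    False := by
  refine (hss i j hij).false_of_crosses ?_ hx hi hj
  rcases hij.lt_or_gt with hlt | hlt
  · exact not_sameHyp_of_ssubset (C.proper _ (hmem j)).1 (hanti hlt)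
  · exact fun s => not_sameHyp_of_ssubset (C.proper _ (hmem i)).1 (hanti hlt) s.symm

lemma le_length_of_crosses (hmem : ∀ i, hs i ∈ C.HS) (hanti : StrictAnti hs)
    (hss : ∀ i j, i ≠ j → C.StronglySeparated (hs i) (hs j)) (k : ℕ)
    {v : C.HS} (hv : Crosses (hs k) v) (W : C.contactGraph.Walk ⟨hs 0, hmem 0⟩ v) :
    k ≤ W.length := by
  induction k generalizing v with
  | zero => exact Nat.zero_le _
  | succ k ih =>
    have hvk : LiesIn (hs k) v := liesIn_of_crosses_of_subset (hanti.antitone k.le_succ)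
      (fun t => false_of_crosses_of_crosses hmem hanti hss k.succ_ne_self.symm v.2 (Or.inr t) hv)
      hv
    obtain ⟨u, hu, huk⟩ := exists_mem_support_crosses (hmem k) W
      (Or.inr (compl_subset_compl.mpr (hanti.antitone k.zero_le))) hvk
    have huv : u ≠ v := by
      rintro rfl
      exact false_of_crosses_of_crosses hmem hanti hss k.succ_ne_self.symm u.2 huk hv
    obtain ⟨q, r, rfl⟩ := Walk.mem_support_iff_exists_append.mp hu
    have hr : r.length ≠ 0 := fun h0 => huv (Walk.eq_of_length_eq_zero h0)
    have hq := ih huk q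
    rw [Walk.length_append]
    omega

lemma edist_add_le_edist_zero (hmem : ∀ i, hs i ∈ C.HS) (hanti : StrictAnti hs)
    (hss : ∀ i j, i ≠ j → C.StronglySeparated (hs i) (hs j)) {j n : ℕ} (hjn : j + 1 < n) :
    C.contactGraph.edist ⟨hs (j + 1), hmem (j + 1)⟩ ⟨hs n, hmem n⟩ + j ≤
      C.contactGraph.edist ⟨hs 0, hmem 0⟩ ⟨hs n, hmem n⟩ := by
  by_cases htop : C.contactGraph.edist ⟨hs 0, hmem 0⟩ ⟨hs n, hmem n⟩ = ⊤
  · rw [htop]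
    exact le_top
  obtain ⟨p, hp⟩ := exists_walk_of_edist_ne_top htop
  obtain ⟨v, hv, hvj⟩ := exists_mem_support_crosses (hmem (j + 1)) p
    (Or.inr (compl_subset_compl.mpr (hanti.antitone (j + 1).zero_le)))
    (Or.inl (hanti hjn).subset)
  obtain ⟨q, r, rfl⟩ := Walk.mem_support_iff_exists_append.mp hv
  have hq := le_length_of_crosses hmem hanti hss (j + 1) hvj q
  have hr := edist_le_length_add_one_of_crosses (h := ⟨_, hmem (j + 1)⟩) hvj
    (not_crosses_of_ssubset (C.proper _ (hmem n)).1 (hanti hjn)) r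
  rw [← hp, Walk.length_append]
  calc _ ≤ (r.length + 1 : ℕ∞) + j := by gcongr
    _ ≤ ((q.length + r.length : ℕ) : ℕ∞) := by norm_cast; omega

end Chain

end CubicalCpx

/-- If `(h n)` is an infinite decreasing chain
`h (n+1) ⊂ h n` of pairwise strongly separated half-spaces, then the sequence of
hyperplanes `(ĥ n)` is a Gromov sequence in the contact graph:
`(ĥ n | ĥ m)_{ĥ 0} → ∞` as `n, m → ∞` (stated without subtraction as
`2 M + d(ĥ n, ĥ m) ≤ d(ĥ 0, ĥ n) + d(ĥ 0, ĥ m)` for `n, m` large); in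
particular the contact graph is unbounded. -/
theorem stmt5 (C : CubicalCpx V) (hs : ℕ → Set V)
    (hmem : ∀ i, hs i ∈ C.HS)
    (hchain : ∀ i, hs (i + 1) ⊂ hs i)
    (hss : ∀ i j, i ≠ j → C.StronglySeparated (hs i) (hs j)) :
    (∀ M : ℕ, ∃ K : ℕ, ∀ n m, K ≤ n → K ≤ m →
      2 * (M : ℕ∞) + C.contactGraph.edist ⟨hs n, hmem n⟩ ⟨hs m, hmem m⟩ ≤
        C.contactGraph.edist ⟨hs 0, hmem 0⟩ ⟨hs n, hmem n⟩
          + C.contactGraph.edist ⟨hs 0, hmem 0⟩ ⟨hs m, hmem m⟩) ∧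
    (∀ R : ℕ, ∃ n, (R : ℕ∞) ≤
      C.contactGraph.edist ⟨hs 0, hmem 0⟩ ⟨hs n, hmem n⟩) := by
  set d : ℕ → ℕ → ℕ∞ := fun a b => C.contactGraph.edist ⟨hs a, hmem a⟩ ⟨hs b, hmem b⟩
  have key : ∀ {j n}, j + 1 < n → d (j + 1) n + j ≤ d 0 n :=
    CubicalCpx.edist_add_le_edist_zero hmem (strictAnti_nat_of_succ_lt hchain) hss
  refine ⟨fun M => ⟨M + 2, fun n m hn hm => ?_⟩,
    fun R => ⟨R + 2, le_add_self.trans (key (by omega))⟩⟩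
  obtain ⟨j, hjn, hjm, hMj⟩ : ∃ j, j + 1 < n ∧ j + 1 < m ∧ M ≤ j := ⟨min n m - 2, by omega⟩
  calc 2 * (M : ℕ∞) + d n m ≤ j + j + (d (j + 1) n + d (j + 1) m) := by
        rw [two_mul]
        gcongr
        exact SimpleGraph.edist_triangle.trans_eq (by rw [SimpleGraph.edist_comm])
    _ = (d (j + 1) n + j) + (d (j + 1) m + j) := by ring
    _ ≤ d 0 n + d 0 m := add_le_add (key hjn) (key hjm)
end

section
/- Let a group G act by automorphisms on a finite-dimensional CAT(0) cubical complex X with Roller compactification X̄, fix a basepoint o ∈ X, and define h_x(a) = d(o,a) − 2(a|x)_o for x ∈ X̄ and a ∈ X (the horofunction based at o). Then the map σ : G × X̄ → ℝ given by σ(g, x) = h_x(g⁻¹ o) is a cocycle: σ(g g', x) = σ(g, g' x) + σ(g', x) for all g, g' ∈ G and x ∈ X̄. -/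
/-!
The Roller compactification `X̄` of a finite-dimensional CAT(0) cubical
complex, modeled via ultrafilters on the pocset `H` of half-spaces (with
involution `c : h ↦ h*`).  A group `G` acts on `H` commuting with `c`, hence on
points by taking images of ultrafilters.  The horofunction based at the vertex
`o` is `h_x(a) = d(o,a) − 2 (a|x)_o`, where `(a|x)_o = d(o, m(a,x,o))`.
-/

open Set

/-- the median -/
def med {H : Type*} (A B C : Set H) : Set H := (A ∩ B) ∪ (B ∩ C) ∪ (C ∩ A)

/-- the combinatorial distance `d(a,b) = |U_a \ U_b| (= ½|U_a △ U_b|)` -/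
noncomputable def dd {H : Type*} (A B : Set H) : ℕ := (A \ B).ncard

/-- the action of `g` on a point of the Roller compactification -/
def ptAct {H G : Type*} [Group G] [MulAction G H] (g : G) (U : Set H) : Set H :=
  (g • ·) '' U

/-!
Flipping half-spaces with `c` identifies `U_o \ m(a,x,o)` with the half-spaces of `x` lying in
`a` but not in `U_o`, so `h_x(a)` is the signed count `#((U_o \ a) ∩ x) - #((a \ U_o) ∩ x)` of
the walls between `o` and `a`, seen through `x`. Such signed counts telescope along
`o → g'⁻¹o → (gg')⁻¹o` and are `G`-invariant, which is exactly the cocycle identity.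
-/

section SignedDiffCount

variable {α : Type*}

noncomputable def signedDiffCount (P Q : Set α) : ℤ := (P \ Q).ncard - (Q \ P).ncard

lemma signedDiffCount_eq_of_symmDiff_subset {P Q F : Set α} (hF : F.Finite)
    (hPQ : symmDiff P Q ⊆ F) :
    signedDiffCount P Q = (P ∩ F).ncard - (Q ∩ F).ncard := by
  have hP : (P ∩ F) \ Q = P \ Q := by
    ext h; have := @hPQ h; simp only [Set.mem_symmDiff] at this; aesop
  have hQ : (Q ∩ F) \ P = Q \ P := by
    ext h; have := @hPQ h; simp only [Set.mem_symmDiff] at this; aesop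
  have hPQF : P ∩ F ∩ Q = Q ∩ F ∩ P := by ext; simp only [Set.mem_inter_iff]; tauto
  have splitP := Set.ncard_inter_add_ncard_sdiff_eq_ncard (P ∩ F) Q (hF.inter_of_right P)
  have splitQ := Set.ncard_inter_add_ncard_sdiff_eq_ncard (Q ∩ F) P (hF.inter_of_right Q)
  rw [hP, hPQF] at splitP
  rw [hQ] at splitQ
  rw [signedDiffCount]
  omega

lemma signedDiffCount_add {P Q R : Set α} (hPQ : (symmDiff P Q).Finite)
    (hQR : (symmDiff Q R).Finite) :
    signedDiffCount P Q + signedDiffCount Q R = signedDiffCount P R := by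
  have hF := hPQ.union hQR
  rw [signedDiffCount_eq_of_symmDiff_subset hF Set.subset_union_left,
    signedDiffCount_eq_of_symmDiff_subset hF Set.subset_union_right,
    signedDiffCount_eq_of_symmDiff_subset hF (symmDiff_triangle P Q R)]
  ring

lemma signedDiffCount_image {β : Type*} {f : α → β} (hf : f.Injective) (P Q : Set α) :
    signedDiffCount (f '' P) (f '' Q) = signedDiffCount P Q := by
  simp only [signedDiffCount, ← Set.image_sdiff hf, Set.ncard_image_of_injective _ hf]

lemma finite_symmDiff_inter {P Q : Set α} (h : (symmDiff P Q).Finite) (y : Set α) :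
    (symmDiff (P ∩ y) (Q ∩ y)).Finite := by
  rw [← inter_symmDiff_distrib_right]
  exact h.inter_of_left y

end SignedDiffCount

def IsOrientation {α : Type*} (c : α → α) (U : Set α) : Prop := ∀ h, h ∈ U ↔ c h ∉ U

lemma horofunction_eq_signedDiffCount {α : Type*} {c : α → α} (hc : c.Involutive)
    {Uo a x : Set α} (ho : IsOrientation c Uo) (ha : IsOrientation c a)
    (hx : IsOrientation c x) (hfin : (Uo \ a).Finite) :
    (dd Uo a : ℤ) - 2 * dd Uo (med a x Uo) = signedDiffCount (Uo ∩ x) (a ∩ x) := by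
  have hmed : Uo \ med a x Uo = (Uo \ a) \ x := by
    ext h; simp only [med, Set.mem_sdiff, Set.mem_union, Set.mem_inter_iff]; tauto
  have hflip : c ⁻¹' ((Uo \ a) \ x) = (a ∩ x) \ (Uo ∩ x) := by
    ext h; simp only [Set.mem_preimage, Set.mem_sdiff, Set.mem_inter_iff, ho h, ha h, hx h]
    tauto
  have hcard : ((Uo \ a) \ x).ncard = ((a ∩ x) \ (Uo ∩ x)).ncard := by
    rw [← hflip, Set.ncard_preimage_of_injective_subset_range hc.injective
      (hc.surjective.range_eq ▸ Set.subset_univ _)]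
  have hdiff : (Uo ∩ x) \ (a ∩ x) = (Uo \ a) ∩ x := by
    ext; simp only [Set.mem_sdiff, Set.mem_inter_iff]; tauto
  have hsplit := Set.ncard_inter_add_ncard_sdiff_eq_ncard (Uo \ a) x hfin
  rw [dd, dd, hmed, signedDiffCount, hdiff, ← hsplit, hcard]
  push_cast
  ring

section PtAct

open scoped Pointwise

variable {H G : Type*} [Group G] [MulAction G H]

lemma ptAct_eq_smul (g : G) (U : Set H) : ptAct g U = g • U := rfl

lemma ptAct_one (U : Set H) : ptAct (1 : G) U = U := one_smul G U

lemma ptAct_mul (g g' : G) (U : Set H) : ptAct (g * g') U = ptAct g (ptAct g' U) :=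
  mul_smul g g' U

lemma ptAct_inter (g : G) (U V : Set H) : ptAct g (U ∩ V) = ptAct g U ∩ ptAct g V :=
  Set.smul_set_inter

lemma signedDiffCount_ptAct (g : G) (P Q : Set H) :
    signedDiffCount (ptAct g P) (ptAct g Q) = signedDiffCount P Q :=
  signedDiffCount_image (MulAction.injective g) P Q

lemma IsOrientation.ptAct {c : H → H} (hequiv : ∀ (g : G) (h : H), g • c h = c (g • h))
    (g : G) {x : Set H} (hx : IsOrientation c x) : IsOrientation c (ptAct g x) := by
  intro h
  simp only [ptAct_eq_smul, Set.mem_smul_set_iff_inv_smul_mem, hequiv]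
  exact hx _

end PtAct

/-- Let `G` act by automorphisms on `X` (equivalently on the
half-space pocset, commuting with the involution), let `o` be a vertex, and let
`σ(g, x) = h_x(g⁻¹ o)` where `h_x(a) = d(o,a) − 2 (a|x)_o` is the horofunction
based at `o`.  Then `σ` is a cocycle: `σ(g g', x) = σ(g, g' x) + σ(g', x)`. -/
theorem stmt12 {H G : Type*} [Group G] [MulAction G H]
    (c : H → H) (hc : ∀ h, c (c h) = h)
    (hequiv : ∀ (g : G) (h : H), g • (c h) = c (g • h))
    (Uo : Set H) (ho : ∀ h, h ∈ Uo ↔ c h ∉ Uo)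
    (hfin : ∀ g : G, (ptAct g Uo \ Uo).Finite ∧ (Uo \ ptAct g Uo).Finite)
    (σ : G → Set H → ℝ)
    (hσ : ∀ (g : G) (x : Set H), σ g x =
      (dd Uo (ptAct g⁻¹ Uo) : ℝ) - 2 * (dd Uo (med (ptAct g⁻¹ Uo) x Uo) : ℝ))
    (g g' : G) (x : Set H) (hx : ∀ h, h ∈ x ↔ c h ∉ x) :
    σ (g * g') x = σ g (ptAct g' x) + σ g' x := by
  have hσ_signed : ∀ k y, IsOrientation c y →
      σ k y = signedDiffCount (Uo ∩ y) (ptAct k⁻¹ Uo ∩ y) := fun k y hy => by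
    rw [hσ]
    exact_mod_cast horofunction_eq_signedDiffCount hc ho (IsOrientation.ptAct hequiv _ ho) hy
      (hfin k⁻¹).2
  have hmiddle : σ g (ptAct g' x) =
      signedDiffCount (ptAct g'⁻¹ Uo ∩ x) (ptAct (g * g')⁻¹ Uo ∩ x) := by
    rw [hσ_signed _ _ (IsOrientation.ptAct hequiv g' hx), ← signedDiffCount_ptAct g'⁻¹,
      ptAct_inter, ptAct_inter, ← ptAct_mul, ← ptAct_mul, inv_mul_cancel, ptAct_one, mul_inv_rev]
  have hfinite : ∀ k, (symmDiff Uo (ptAct k Uo)).Finite := fun k => (hfin k).2.union (hfin k).1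
  have hfinite' : (symmDiff (ptAct g'⁻¹ Uo) (ptAct (g * g')⁻¹ Uo)).Finite :=
    ((symmDiff_comm Uo _ ▸ hfinite g'⁻¹).union (hfinite _)).subset (symmDiff_triangle _ Uo _)
  rw [hσ_signed _ _ hx, hσ_signed _ _ hx, hmiddle, add_comm, ← Int.cast_add,
    signedDiffCount_add (finite_symmDiff_inter (hfinite _) x) (finite_symmDiff_inter hfinite' x)]
end
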